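/- Let n ≥ 2 and let u(y,z) = ∫₀ᶻ (s² + |y|² − 1)² ds on ℝⁿ = ℝ^{n−1} × ℝ. For every ε > 0 and every open neighborhood U ⊂ ℝⁿ of the equator S' = {(y,0) : |y| = 1}, there exists a smooth function ũ : ℝⁿ → ℝ such that: (i) |ũ(y,z) − u(y,z)| ≤ ε and ‖Dũ(y,z) − Du(y,z)‖ ≤ ε for all (y,z) (C¹-closeness); (ii) ∂ũ/∂z(y,z) > 0 for all (y,z); and (iii) ũ(y,z) = u(y,z) at every point (y,z) of the unit sphere {|y|² + z² = 1} that does not lie in U. -/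

import Mathlib

/-- The unfolding function `u(y,z) = ∫₀ᶻ (s² + |y|² − 1)² ds` on
`ℝⁿ = ℝ^{n−1} × ℝ` (with `k = n−1`). -/
noncomputable def ufun (k : ℕ) (p : EuclideanSpace ℝ (Fin k) × ℝ) : ℝ :=
  ∫ s in (0:ℝ)..p.2, (s^2 + ‖p.1‖^2 - 1)^2

/-!
With `q = |y|² + z² − 1` we have `∂u/∂z = q²`, which vanishes exactly on the unit sphere.
Take a cutoff `ψ` equal to `1` on `|q| ≤ η`, and a function `β` equal to `z` for `|z| < r` and
vanishing for `|z| ≥ R`, where `R` is so small that the points of the sphere with `|z| < R` lie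
in `U`, and `η ≤ r²`. The regularization is `ũ = u + ψ(q) (δ q z + δ²/2 β(z))`: the correction
has compact support, so it is `C¹`-small for small `δ`, and it vanishes on the sphere off `U`.
Near the sphere its `z`-slope is `δ (2z² + q) + δ²/2 β'(z)`, so `∂ũ/∂z` is
`(q + δ/2)² + δ²/4 + 2δz² > 0` where `|z| < r`, and at least `δ (2r² − η) − O(δ²) > 0` elsewhere;
away from the sphere `q² ≥ η²` beats the `O(δ)` slope of the correction.
-/

open Set Filter Topology Metric

section Calculus

variable {E F : Type*} [NormedAddCommGroup E] [NormedSpace ℝ E] [NormedAddCommGroup F]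
  [NormedSpace ℝ F]

theorem HasCompactSupport.exists_bound_and_fderiv_bound {f : E → F} (hf : ContDiff ℝ 1 f)
    (hs : HasCompactSupport f) : ∃ M, ∀ x, ‖f x‖ ≤ M ∧ ‖fderiv ℝ f x‖ ≤ M := by
  obtain ⟨M₀, h₀⟩ := hs.exists_bound_of_continuous hf.continuous
  obtain ⟨M₁, h₁⟩ := (hs.fderiv ℝ).exists_bound_of_continuous (hf.continuous_fderiv one_ne_zero)
  exact ⟨max M₀ M₁, fun x => ⟨(h₀ x).trans (le_max_left _ _), (h₁ x).trans (le_max_right _ _)⟩⟩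

theorem DifferentiableAt.exists_hasDerivAt_slice {f : E × ℝ → F} {p : E × ℝ}
    (hf : DifferentiableAt ℝ f p) :
    ∃ d, HasDerivAt (fun z => f (p.1, z)) d p.2 ∧ ‖d‖ ≤ ‖fderiv ℝ f p‖ := by
  refine ⟨fderiv ℝ f p (0, 1), hf.hasFDerivAt.comp_hasDerivAt_of_eq p.2
    ((hasDerivAt_const _ _).prodMk (hasDerivAt_id _)) rfl, ?_⟩
  simpa using (fderiv ℝ f p).le_opNorm (0, 1)

theorem norm_smul_add_smul_le {a b M : ℝ} (ha : 0 ≤ a) (hb : 0 ≤ b) {u v : F} (hu : ‖u‖ ≤ M)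
    (hv : ‖v‖ ≤ M) : ‖a • u + b • v‖ ≤ (a + b) * M :=
  calc ‖a • u + b • v‖ ≤ a * ‖u‖ + b * ‖v‖ := by
        simpa [norm_smul, abs_of_nonneg ha, abs_of_nonneg hb] using norm_add_le (a • u) (b • v)
    _ ≤ (a + b) * M := by nlinarith

theorem norm_mul_add_mul_le_and_norm_fderiv_le {A B : E → ℝ} {x : E}
    (hA : DifferentiableAt ℝ A x) (hB : DifferentiableAt ℝ B x) {a b M : ℝ} (ha : 0 ≤ a)
    (hb : 0 ≤ b) (hAM : ‖A x‖ ≤ M ∧ ‖fderiv ℝ A x‖ ≤ M) (hBM : ‖B x‖ ≤ M ∧ ‖fderiv ℝ B x‖ ≤ M) :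
    ‖a * A x + b * B x‖ ≤ (a + b) * M ∧
      ‖fderiv ℝ (fun x => a * A x + b * B x) x‖ ≤ (a + b) * M := by
  rw [fderiv_fun_add (hA.const_mul a) (hB.const_mul b), fderiv_const_mul hA, fderiv_const_mul hB]
  exact ⟨norm_smul_add_smul_le ha hb hAM.1 hBM.1, norm_smul_add_smul_le ha hb hAM.2 hBM.2⟩

end Calculus

theorem exists_contDiff_eq_self_near_zero {r R : ℝ} (hr : 0 < r) (hrR : r < R) :
    ∃ β : ℝ → ℝ, ContDiff ℝ (⊤ : ℕ∞) β ∧ (∀ z, |z| < r → β =ᶠ[𝓝 z] id) ∧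
      ∀ z, R ≤ |z| → β z = 0 := by
  let χ : ContDiffBump (0 : ℝ) := ⟨r, R, hr, hrR⟩
  refine ⟨fun z => z * χ z, contDiff_id.mul χ.contDiff, fun z hz => ?_, fun z hz => ?_⟩
  · filter_upwards [(isOpen_lt continuous_abs continuous_const).mem_nhds hz] with w hw
    rw [χ.one_of_mem_closedBall (by simpa [Real.dist_eq] using hw.le), mul_one, id]
  · simp only [χ.zero_of_le_dist (by simpa [Real.dist_eq] using hz), mul_zero]

theorem regularized_slope_pos {q z a b δ η r M : ℝ} (hδ : 0 < δ) (hδ1 : δ ≤ 1) (hη : 0 ≤ η)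
    (hr : 0 ≤ r) (hηr : η ≤ r ^ 2) (hMη : 2 * δ * M < η ^ 2) (hMr : δ * M < r ^ 2)
    (ha : |a| ≤ M) (hb : |b| ≤ M) (ha' : |q| < η → a = 2 * z ^ 2 + q)
    (hb' : |q| < η → |z| < r → b = 1) :
    0 < q ^ 2 + δ * a + δ ^ 2 / 2 * b := by
  have hbM : -M ≤ b := (neg_le_neg hb).trans (neg_abs_le b)
  by_cases hq : |q| < η
  · rw [ha' hq]
    by_cases hz : |z| < r
    · rw [hb' hq hz]
      nlinarith [sq_nonneg (q + δ / 2), sq_nonneg z]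
    · have hz2 : r ^ 2 ≤ z ^ 2 := sq_abs z ▸ pow_le_pow_left₀ hr (not_lt.1 hz) 2
      nlinarith [neg_abs_le q, mul_le_mul_of_nonneg_left hbM (sq_nonneg δ)]
  · have hq2 : η ^ 2 ≤ q ^ 2 := sq_abs q ▸ pow_le_pow_left₀ hη (not_lt.1 hq) 2
    nlinarith [(neg_le_neg ha).trans (neg_abs_le a), mul_le_mul_of_nonneg_left hbM (sq_nonneg δ)]

namespace WrinkledUnfolding

variable {k : ℕ}

noncomputable def sphereDefect (p : EuclideanSpace ℝ (Fin k) × ℝ) : ℝ := ‖p.1‖ ^ 2 + p.2 ^ 2 - 1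

def equator (k : ℕ) : Set (EuclideanSpace ℝ (Fin k) × ℝ) := {p | p.2 = 0 ∧ ‖p.1‖ = 1}

theorem contDiff_sphereDefect : ContDiff ℝ (⊤ : ℕ∞) (sphereDefect (k := k)) :=
  ((contDiff_fst.norm_sq ℝ).add (contDiff_snd.pow 2)).sub contDiff_const

theorem hasDerivAt_sphereDefect_slice (p : EuclideanSpace ℝ (Fin k) × ℝ) :
    HasDerivAt (fun z => sphereDefect (p.1, z)) (2 * p.2) p.2 :=
  (((hasDerivAt_pow 2 p.2).const_add (‖p.1‖ ^ 2)).sub_const 1).congr_deriv (by ring)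

theorem hasCompactSupport_comp_sphereDefect {ψ : ℝ → ℝ} (hψ : HasCompactSupport ψ) :
    HasCompactSupport fun p : EuclideanSpace ℝ (Fin k) × ℝ => ψ (sphereDefect p) := by
  obtain ⟨T, hT⟩ := hψ.isCompact.isBounded.subset_closedBall 0
  refine HasCompactSupport.intro (isCompact_closedBall 0 (|T| + 1)) fun p hp => ?_
  refine image_eq_zero_of_notMem_tsupport fun hq => ?_
  have hpT : |T| + 1 < ‖p‖ := by simpa using hp
  have hnorm : ‖p‖ ^ 2 ≤ ‖p.1‖ ^ 2 + p.2 ^ 2 := by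
    rw [Prod.norm_def, Real.norm_eq_abs]
    rcases max_choice ‖p.1‖ |p.2| with h | h <;> rw [h] <;> nlinarith [sq_abs p.2, sq_nonneg ‖p.1‖]
  have hqT := hT hq
  rw [mem_closedBall, dist_zero_right, Real.norm_eq_abs, sphereDefect] at hqT
  nlinarith [le_abs_self (‖p.1‖ ^ 2 + p.2 ^ 2 - 1), abs_nonneg T, le_abs_self T]

theorem eventually_comp_sphereDefect_slice_eq_one {ψ : ℝ → ℝ} {η : ℝ}
    (hψ : ∀ t, |t| ≤ η → ψ t = 1) {p : EuclideanSpace ℝ (Fin k) × ℝ}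
    (hp : |sphereDefect p| < η) : ∀ᶠ z in 𝓝 p.2, ψ (sphereDefect (p.1, z)) = 1 := by
  have hc : ContinuousAt (fun z => |sphereDefect (p.1, z)|) p.2 :=
    continuous_abs.continuousAt.comp (hasDerivAt_sphereDefect_slice p).continuousAt
  filter_upwards [hc.eventually (gt_mem_nhds hp)] with z hz
  exact hψ _ hz.le

theorem isCompact_equator (k : ℕ) : IsCompact (equator k) := by
  convert (isCompact_sphere (0 : EuclideanSpace ℝ (Fin k)) 1).prod
    (isCompact_singleton (x := (0 : ℝ))) using 1
  ext p
  simp [equator, and_comm]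

theorem exists_mem_equator_dist_le {p : EuclideanSpace ℝ (Fin k) × ℝ}
    (hp : ‖p.1‖ ^ 2 + p.2 ^ 2 = 1) (hz : |p.2| < 1) : ∃ e ∈ equator k, dist p e ≤ |p.2| := by
  obtain ⟨y, z⟩ := p
  have hz2 : z ^ 2 ≤ |z| := by nlinarith [sq_abs z, abs_nonneg z]
  have hy : 0 < ‖y‖ := by
    by_contra! h
    nlinarith [norm_nonneg y]
  have hy1 : ‖y‖ ≤ 1 := by nlinarith [sq_nonneg z]
  refine ⟨(‖y‖⁻¹ • y, 0), ⟨rfl, by simp [norm_smul, hy.ne']⟩, ?_⟩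
  have hdist : dist y (‖y‖⁻¹ • y) = 1 - ‖y‖ :=
    calc dist y (‖y‖⁻¹ • y) = ‖(1 - ‖y‖⁻¹) • y‖ := by rw [dist_eq_norm, sub_smul, one_smul]
      _ = |(1 - ‖y‖⁻¹) * ‖y‖| := by rw [norm_smul, Real.norm_eq_abs, abs_mul, abs_of_pos hy]
      _ = 1 - ‖y‖ := by
        rw [sub_mul, inv_mul_cancel₀ hy.ne', one_mul, abs_sub_comm, abs_of_nonneg (by linarith)]
  rw [Prod.dist_eq, hdist, Real.dist_0_eq_abs]
  exact max_le (by nlinarith) le_rfl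

theorem hasDerivAt_ufun_slice (p : EuclideanSpace ℝ (Fin k) × ℝ) :
    HasDerivAt (fun z => ufun k (p.1, z)) (sphereDefect p ^ 2) p.2 := by
  have hcont : Continuous fun s : ℝ => (s ^ 2 + ‖p.1‖ ^ 2 - 1) ^ 2 := by fun_prop
  refine (hcont.integral_hasStrictDerivAt 0 p.2).hasDerivAt.congr_deriv ?_
  rw [sphereDefect]
  ring

theorem ufun_eq (p : EuclideanSpace ℝ (Fin k) × ℝ) :
    ufun k p = p.2 ^ 5 / 5 + 2 * (‖p.1‖ ^ 2 - 1) * p.2 ^ 3 / 3 + (‖p.1‖ ^ 2 - 1) ^ 2 * p.2 := by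
  set a := ‖p.1‖ ^ 2 - 1
  have hderiv : ∀ z ∈ uIcc 0 p.2, HasDerivAt
      (fun z : ℝ => z ^ 5 / 5 + 2 * a * z ^ 3 / 3 + a ^ 2 * z) ((z ^ 2 + a) ^ 2) z := by
    intro z _
    refine ((((hasDerivAt_pow 5 z).div_const 5).add
      (((hasDerivAt_pow 3 z).const_mul (2 * a)).div_const 3)).add
      ((hasDerivAt_id z).const_mul (a ^ 2))).congr_deriv ?_
    push_cast
    ring
  have hint := intervalIntegral.integral_eq_sub_of_hasDerivAt hderiv
    (Continuous.intervalIntegrable (by fun_prop) _ _)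
  simp_rw [ufun, add_sub_assoc]
  rw [hint]
  ring

theorem contDiff_ufun : ContDiff ℝ (⊤ : ℕ∞) (ufun k) := by
  have hN : ContDiff ℝ (⊤ : ℕ∞) fun p : EuclideanSpace ℝ (Fin k) × ℝ => ‖p.1‖ ^ 2 - 1 :=
    (contDiff_fst.norm_sq ℝ).sub contDiff_const
  rw [funext ufun_eq]
  exact (((contDiff_snd.pow 5).div_const 5).add
    ((contDiff_const.mul hN).mul (contDiff_snd.pow 3) |>.div_const 3)).add
    ((hN.pow 2).mul contDiff_snd)

def IsRegularization (k : ℕ) (ε : ℝ) (ut : EuclideanSpace ℝ (Fin k) × ℝ → ℝ) : Prop :=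
  ContDiff ℝ (⊤ : ℕ∞) ut ∧
    (∀ p, |ut p - ufun k p| ≤ ε ∧ ‖fderiv ℝ ut p - fderiv ℝ (ufun k) p‖ ≤ ε) ∧
    ∀ p : EuclideanSpace ℝ (Fin k) × ℝ, 0 < deriv (fun z => ut (p.1, z)) p.2

section Perturbation

variable {A B : EuclideanSpace ℝ (Fin k) × ℝ → ℝ} {η r : ℝ}

theorem slope_ufun_add_pos {δ M : ℝ} (hA : Differentiable ℝ A) (hB : Differentiable ℝ B)
    (hδ : 0 < δ) (hδ1 : δ ≤ 1) (hη : 0 ≤ η) (hr : 0 ≤ r) (hηr : η ≤ r ^ 2)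
    (hMη : 2 * δ * M < η ^ 2) (hMr : δ * M < r ^ 2)
    (hAM : ∀ p, ‖fderiv ℝ A p‖ ≤ M) (hBM : ∀ p, ‖fderiv ℝ B p‖ ≤ M)
    (hA' : ∀ p, |sphereDefect p| < η →
      HasDerivAt (fun z => A (p.1, z)) (2 * p.2 ^ 2 + sphereDefect p) p.2)
    (hB' : ∀ p, |sphereDefect p| < η → |p.2| < r → HasDerivAt (fun z => B (p.1, z)) 1 p.2)
    (p : EuclideanSpace ℝ (Fin k) × ℝ) :
    0 < deriv (fun z => ufun k (p.1, z) + (δ * A (p.1, z) + δ ^ 2 / 2 * B (p.1, z))) p.2 := by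
  obtain ⟨a, ha, haM⟩ := (hA p).exists_hasDerivAt_slice
  obtain ⟨b, hb, hbM⟩ := (hB p).exists_hasDerivAt_slice
  rw [((hasDerivAt_ufun_slice p).fun_add ((ha.const_mul δ).fun_add (hb.const_mul _))).deriv,
    ← add_assoc]
  exact regularized_slope_pos hδ hδ1 hη hr hηr hMη hMr (haM.trans (hAM p)) (hbM.trans (hBM p))
    (fun hq => ha.unique (hA' p hq)) (fun hq hz => hb.unique (hB' p hq hz))

theorem exists_isRegularization_ufun_add (hA : ContDiff ℝ (⊤ : ℕ∞) A)
    (hB : ContDiff ℝ (⊤ : ℕ∞) B) (hAs : HasCompactSupport A) (hBs : HasCompactSupport B)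
    (hη : 0 < η) (hr : 0 ≤ r) (hηr : η ≤ r ^ 2)
    (hA' : ∀ p, |sphereDefect p| < η →
      HasDerivAt (fun z => A (p.1, z)) (2 * p.2 ^ 2 + sphereDefect p) p.2)
    (hB' : ∀ p, |sphereDefect p| < η → |p.2| < r → HasDerivAt (fun z => B (p.1, z)) 1 p.2)
    {ε : ℝ} (hε : 0 < ε) :
    ∃ δ : ℝ, IsRegularization k ε fun p => ufun k p + (δ * A p + δ ^ 2 / 2 * B p) := by
  obtain ⟨MA, hMA⟩ := hAs.exists_bound_and_fderiv_bound (hA.of_le (by simp))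
  obtain ⟨MB, hMB⟩ := hBs.exists_bound_and_fderiv_bound (hB.of_le (by simp))
  set M := max MA MB
  have hAM : ∀ p, ‖A p‖ ≤ M ∧ ‖fderiv ℝ A p‖ ≤ M := fun p =>
    ⟨(hMA p).1.trans (le_max_left _ _), (hMA p).2.trans (le_max_left _ _)⟩
  have hBM : ∀ p, ‖B p‖ ≤ M ∧ ‖fderiv ℝ B p‖ ≤ M := fun p =>
    ⟨(hMB p).1.trans (le_max_right _ _), (hMB p).2.trans (le_max_right _ _)⟩
  have hM : 0 ≤ M := (norm_nonneg _).trans (hAM 0).1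
  have hsmall : ∀ t > 0, ∀ᶠ δ in 𝓝[>] (0 : ℝ), 2 * δ * M < t := fun t ht =>
    nhdsWithin_le_nhds <| (Continuous.tendsto (by fun_prop) 0).eventually (gt_mem_nhds (by simpa))
  have hunit : ∀ᶠ δ in 𝓝[>] (0 : ℝ), δ ∈ Ioc 0 1 := Ioc_mem_nhdsGT one_pos
  obtain ⟨δ, ⟨hδ, hδ1⟩, hMη, hMr, hMε⟩ := (hunit.and ((hsmall _ (pow_pos hη 2)).and
    ((hsmall η hη).and (hsmall ε hε)))).exists
  have hAd : Differentiable ℝ A := hA.differentiable (by simp)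
  have hBd : Differentiable ℝ B := hB.differentiable (by simp)
  refine ⟨δ, contDiff_ufun.add ((contDiff_const.mul hA).add (contDiff_const.mul hB)),
    fun p => ?_, slope_ufun_add_pos hAd hBd hδ hδ1 hη.le hr hηr hMη
      (by nlinarith [mul_nonneg hδ.le hM]) (fun p => (hAM p).2) (fun p => (hBM p).2) hA' hB'⟩
  obtain ⟨h₀, h₁⟩ := norm_mul_add_mul_le_and_norm_fderiv_le (hAd p) (hBd p) hδ.le
    (by positivity : 0 ≤ δ ^ 2 / 2) (hAM p) (hBM p)
  have hle : (δ + δ ^ 2 / 2) * M ≤ ε := by nlinarith [mul_nonneg hδ.le hM]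
  refine ⟨by simpa using h₀.trans hle, ?_⟩
  rw [fderiv_fun_add (contDiff_ufun.differentiable (by simp) p)
    (((hAd p).const_mul δ).fun_add ((hBd p).const_mul _)), add_sub_cancel_left]
  exact h₁.trans hle

end Perturbation

theorem exists_isRegularization {ψ β : ℝ → ℝ} {η r ε : ℝ} (hψ : ContDiff ℝ (⊤ : ℕ∞) ψ)
    (hψs : HasCompactSupport ψ) (hψ1 : ∀ t, |t| ≤ η → ψ t = 1) (hβ : ContDiff ℝ (⊤ : ℕ∞) β)
    (hβ1 : ∀ z, |z| < r → β =ᶠ[𝓝 z] id) (hη : 0 < η) (hr : 0 ≤ r) (hηr : η ≤ r ^ 2)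
    (hε : 0 < ε) :
    ∃ δ : ℝ, IsRegularization k ε fun p => ufun k p +
      (δ * (ψ (sphereDefect p) * (sphereDefect p * p.2)) +
        δ ^ 2 / 2 * (ψ (sphereDefect p) * β p.2)) := by
  have hψq := hψ.comp (contDiff_sphereDefect (k := k))
  refine exists_isRegularization_ufun_add (hψq.mul (contDiff_sphereDefect.mul contDiff_snd))
    (hψq.mul (hβ.comp contDiff_snd)) (hasCompactSupport_comp_sphereDefect hψs).mul_right
    (hasCompactSupport_comp_sphereDefect hψs).mul_right hη hr hηr (fun p hp => ?_)
    (fun p hp hz => ?_) hε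
  · refine (((hasDerivAt_sphereDefect_slice p).mul (hasDerivAt_id p.2)).congr_of_eventuallyEq
      ?_).congr_deriv (by rw [id]; ring)
    filter_upwards [eventually_comp_sphereDefect_slice_eq_one hψ1 hp] with z hz
    simp [hz]
  · refine (hasDerivAt_id p.2).congr_of_eventuallyEq ?_
    filter_upwards [eventually_comp_sphereDefect_slice_eq_one hψ1 hp, hβ1 _ hz] with z hz hβz
    simp [hz, hβz]

end WrinkledUnfolding

open WrinkledUnfolding

theorem exists_regularizing_unfolding (n : ℕ)
    (ε : ℝ) (hε : 0 < ε)
    (U : Set (EuclideanSpace ℝ (Fin (n - 1)) × ℝ)) (hU : IsOpen U)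
    (hSU : {p : EuclideanSpace ℝ (Fin (n - 1)) × ℝ | p.2 = 0 ∧ ‖p.1‖ = 1} ⊆ U) :
    ∃ ut : EuclideanSpace ℝ (Fin (n - 1)) × ℝ → ℝ,
      ContDiff ℝ (⊤ : ℕ∞) ut ∧
      (∀ p, |ut p - ufun (n - 1) p| ≤ ε ∧
        ‖fderiv ℝ ut p - fderiv ℝ (ufun (n - 1)) p‖ ≤ ε) ∧
      (∀ p : EuclideanSpace ℝ (Fin (n - 1)) × ℝ,
        0 < deriv (fun z => ut (p.1, z)) p.2) ∧
      (∀ p, ‖p.1‖^2 + p.2^2 = 1 → p ∉ U → ut p = ufun (n - 1) p) := by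
  obtain ⟨r₀, hr₀, hr₀U⟩ := (isCompact_equator _).exists_thickening_subset_open hU hSU
  set R := min r₀ 1
  have hR : 0 < R := lt_min hr₀ one_pos
  obtain ⟨β, hβ, hβ_id, hβ_zero⟩ :=
    exists_contDiff_eq_self_near_zero (half_pos hR) (half_lt_self hR)
  let ψ : ContDiffBump (0 : ℝ) := ⟨(R / 2) ^ 2, 2 * (R / 2) ^ 2, by positivity, by nlinarith⟩
  obtain ⟨δ, hsmooth, hclose, hslope⟩ := exists_isRegularization (k := n - 1) ψ.contDiff
    ψ.hasCompactSupport (fun t ht => ψ.one_of_mem_closedBall (by simpa [Real.dist_eq] using ht))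
    hβ hβ_id (by positivity) (by positivity) le_rfl hε
  refine ⟨_, hsmooth, hclose, hslope, fun p hp hpU => ?_⟩
  have hq : sphereDefect p = 0 := by rw [sphereDefect, hp, sub_self]
  have hz : R ≤ |p.2| := by
    by_contra! hz
    obtain ⟨e, he, hpe⟩ := exists_mem_equator_dist_le hp (hz.trans_le (min_le_right _ _))
    exact hpU (hr₀U (mem_thickening_iff.2 ⟨e, he, hpe.trans_lt (hz.trans_le (min_le_left _ _))⟩))
  simp [hq, hβ_zero _ hz]
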